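/- arXiv:2407.20958 — 3 statements merged into one kernel-verified Lean document; each statement's English description precedes it below -/
import Mathlib

section
/- Let $A$ be a complete Huber pair component over a nonarchimedean field of mixed characteristic $(0,p)$, i.e. a complete topological ring with an open integrally closed subring $A^+ \subseteq A^\circ$ and a ring of definition with the $p$-adic topology. Then $p \cdot A^\circ \subseteq A^+$. -/
/-- An element `x` of a topological ring is topologically nilpotent if `x^n → 0`. -/
def IsTopNilpotent {A : Type*} [Ring A] [TopologicalSpace A] (x : A) : Prop :=
  Filter.Tendsto (fun n : ℕ => x ^ n) Filter.atTop (nhds 0)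

/-- An element `x` of a topological ring is power-bounded if the set of its powers is
bounded: for every neighborhood `U` of `0` there is a neighborhood `V` of `0` with
`V · {xⁿ} ⊆ U`. -/
def IsPowerBoundedElem {A : Type*} [Ring A] [TopologicalSpace A] (x : A) : Prop :=
  ∀ U ∈ nhds (0 : A), ∃ V ∈ nhds (0 : A), ∀ v ∈ V, ∀ n : ℕ, v * x ^ n ∈ U

/-- A subring `S` of `A` is integrally closed in `A` if every element of `A` which is a
root of a monic polynomial with coefficients in `S` lies in `S`. -/
def IsIntegrallyClosedSubring {A : Type*} [CommRing A] (S : Subring A) : Prop :=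
  ∀ x : A, (∃ f : Polynomial A, f.Monic ∧ (∀ i, f.coeff i ∈ S) ∧ Polynomial.eval x f = 0) →
    x ∈ S


/-!
For `x` power-bounded, `p * x` is topologically nilpotent, because `p` is (the sets `pⁿA₀` form
a basis of neighbourhoods of `0`). Hence some power `(p * x)ᴺ` lies in the open subring `A⁺`,
so `p * x` is a root of the monic polynomial `Xᴺ - (p * x)ᴺ` over `A⁺` and lies in `A⁺` by
integral closedness.
-/

open Filter Polynomial

theorem isTopNilpotent_of_pow_mul_subset {A : Type*} [Ring A] [TopologicalSpace A]
    (S : Subring A) {t : A} (ht : t ∈ S)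
    (hbasis : ∀ U ∈ nhds (0 : A), ∃ n : ℕ, {x : A | ∃ a ∈ S, x = t ^ n * a} ⊆ U) :
    IsTopNilpotent t := by
  intro U hU
  rw [mem_map]
  obtain ⟨n₀, hn₀⟩ := hbasis U hU
  filter_upwards [eventually_ge_atTop n₀] with n hn
  exact hn₀ ⟨t ^ (n - n₀), pow_mem ht _, by rw [← pow_add, Nat.add_sub_cancel' hn]⟩

theorem IsTopNilpotent.mul_of_isPowerBoundedElem {A : Type*} [CommRing A] [TopologicalSpace A]
    {t x : A} (ht : IsTopNilpotent t) (hx : IsPowerBoundedElem x) :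
    IsTopNilpotent (t * x) := by
  intro U hU
  obtain ⟨V, hV, hVx⟩ := hx U hU
  rw [mem_map]
  filter_upwards [ht hV] with n hn
  simpa only [Set.mem_preimage, mul_pow] using hVx _ hn n

theorem IsIntegrallyClosedSubring.mem_of_pow_mem {A : Type*} [CommRing A] {S : Subring A}
    (hS : IsIntegrallyClosedSubring S) {x : A} {N : ℕ} (hN : N ≠ 0) (hxN : x ^ N ∈ S) :
    x ∈ S := by
  refine hS x ⟨X ^ N - C (x ^ N), monic_X_pow_sub_C _ hN, fun i => ?_, by simp⟩
  rw [coeff_sub, coeff_X_pow, coeff_C]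
  split_ifs <;> exact S.sub_mem (by first | exact S.one_mem | exact S.zero_mem)
    (by first | exact hxN | exact S.zero_mem)

theorem IsIntegrallyClosedSubring.mem_of_isTopNilpotent {A : Type*} [CommRing A]
    [TopologicalSpace A] {S : Subring A} (hS : IsIntegrallyClosedSubring S)
    (hopen : IsOpen (S : Set A)) {x : A} (hx : IsTopNilpotent x) : x ∈ S := by
  obtain ⟨N, hxN, hN⟩ :=
    ((hx.eventually_mem (hopen.mem_nhds S.zero_mem)).and (eventually_ne_atTop 0)).exists
  exact hS.mem_of_pow_mem hN hxN

theorem stmt_0_general {A : Type*} [CommRing A] [UniformSpace A] (p : ℕ)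
    (Aplus A0 : Subring A)
    (hAplusOpen : IsOpen (Aplus : Set A))
    (hIC : IsIntegrallyClosedSubring Aplus)
    (hA0basis : ∀ U ∈ nhds (0 : A), ∃ n : ℕ,
      {x : A | ∃ a ∈ A0, x = (p : A) ^ n * a} ⊆ U) :
    ∀ x : A, IsPowerBoundedElem x → (p : A) * x ∈ Aplus := fun _ hx =>
  hIC.mem_of_isTopNilpotent hAplusOpen <|
    (isTopNilpotent_of_pow_mul_subset A0 (natCast_mem A0 p) hA0basis).mul_of_isPowerBoundedElem hx

/-- Let `(A, A⁺)` be a complete Huber pair over a nonarchimedean field of mixed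
characteristic `(0,p)`: `A` is a complete topological ring with a ring of definition `A₀`
carrying the `p`-adic topology (the sets `pⁿA₀` are a basis of neighborhoods of `0`), and
`A⁺ ⊆ A⁰` is an open, integrally closed subring contained in the power-bounded elements.
Then `p · A⁰ ⊆ A⁺`. -/
theorem stmt_0 {A : Type*} [CommRing A] [UniformSpace A] [IsUniformAddGroup A]
    [IsTopologicalRing A] [CompleteSpace A] (p : ℕ) (hp : p.Prime)
    (Aplus A0 : Subring A)
    (hAplusOpen : IsOpen (Aplus : Set A))
    (hIC : IsIntegrallyClosedSubring Aplus)
    (hSub : ∀ x : A, x ∈ Aplus → IsPowerBoundedElem x)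
    (hA0open : IsOpen (A0 : Set A))
    (hA0basis : ∀ U ∈ nhds (0 : A), ∃ n : ℕ,
      {x : A | ∃ a ∈ A0, x = (p : A) ^ n * a} ⊆ U) :
    ∀ x : A, IsPowerBoundedElem x → (p : A) * x ∈ Aplus :=
  stmt_0_general p Aplus A0 hAplusOpen hIC hA0basis
end

section
/- The group of continuous homomorphisms from $\mathbb{Z}_p^\ast$ to the group of principal units $\mathbb{Z}_p^{\ast\ast} = 1 + p\mathbb{Z}_p$ is isomorphic to $\mathbb{Z}_p$ if $p$ is odd, and to $\mathbb{Z}_2 \oplus (\mathbb{Z}/2)^{\oplus 2}$ if $p = 2$. -/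
/-!
If `‖w - 1‖ ^ (p - 1) < ‖p‖`, the continuous extension `x ↦ w ^ x` of `n ↦ w ^ n` to `ℤ_p`
satisfies `‖w ^ x - 1‖ = ‖x‖ ‖w - 1‖`, so it is a homeomorphism of `ℤ_p` onto the principal
units `u` with `‖u - 1‖ ≤ ‖w - 1‖`: `1 + pℤ_p = (1 + p) ^ ℤ_p` for `p` odd and `1 + 4ℤ₂ = 5 ^ ℤ₂`.
A continuous homomorphism `f` commutes with these powers. For `p` odd, `u ^ (p - 1) ∈ 1 + pℤ_p`
and `1 + pℤ_p` is torsion free, so `f` is determined by `f (1 + p) = (1 + p) ^ a`, with `a ∈ ℤ_p`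
arbitrary. For `p = 2`, `ℤ₂ˣ = {±1} × 5 ^ ℤ₂`, and `f` is determined by `f (-1) ∈ {±1}` and
`f 5 ∈ ℤ₂ˣ ≅ ℤ/2 × ℤ₂`.
-/

/-- A continuous homomorphism from `ℤ_pˣ` to the group of principal units
`ℤ_p^{∗∗} = 1 + pℤ_p`: a continuous monoid homomorphism `ℤ_pˣ →* ℤ_pˣ` all of whose
values `u` satisfy `‖u - 1‖ < 1`, i.e. land in `1 + pℤ_p`.  These form a group under
pointwise multiplication. -/
def PrincipalUnitHom (p : ℕ) [Fact p.Prime] : Type :=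
  {f : ℤ_[p]ˣ →* ℤ_[p]ˣ // Continuous f ∧ ∀ u : ℤ_[p]ˣ, ‖((f u : ℤ_[p])) - 1‖ < 1}

open Filter Topology

namespace PadicInt

variable {p : ℕ} [Fact p.Prime]

lemma norm_p_lt_one : ‖(p : ℤ_[p])‖ < 1 := (norm_lt_one_iff_dvd _).mpr dvd_rfl

lemma norm_p_pos : 0 < ‖(p : ℤ_[p])‖ := by
  rw [norm_p]; exact inv_pos.mpr (Nat.cast_pos.mpr (Fact.out : p.Prime).pos)

lemma norm_le_norm_p_of_norm_lt_one {x : ℤ_[p]} (hx : ‖x‖ < 1) : ‖x‖ ≤ ‖(p : ℤ_[p])‖ := by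
  obtain ⟨c, rfl⟩ := (norm_lt_one_iff_dvd x).mp hx
  rw [norm_mul]
  exact mul_le_of_le_one_right (norm_nonneg _) (norm_le_one c)

lemma dvd_of_norm_le {a b : ℤ_[p]} (hb : b ≠ 0) (h : ‖a‖ ≤ ‖b‖) : b ∣ a := by
  rcases ValuationRing.dvd_total b a with hba | ⟨c, rfl⟩
  · exact hba
  have ha : 0 < ‖a‖ := norm_pos_iff.mpr (left_ne_zero_of_mul hb)
  rw [norm_mul] at h
  have hc : ‖c‖ = 1 :=
    le_antisymm (norm_le_one c) (le_of_mul_le_mul_left (by rwa [mul_one]) ha)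
  exact (isUnit_iff.mpr hc).mul_right_dvd.mpr dvd_rfl

lemma norm_lt_one_of_pow_lt_norm_p {a : ℤ_[p]} (ha : ‖a‖ ^ (p - 1) < ‖(p : ℤ_[p])‖) : ‖a‖ < 1 :=
  (pow_lt_one_iff_of_nonneg (norm_nonneg a) (Nat.sub_ne_zero_of_lt (Fact.out : p.Prime).one_lt)).mp
    (ha.trans_le (norm_le_one _))

/-- In `(1 + a) ^ p - 1 = p a S + a ^ p` the factor `S` is a unit, so `a ^ p` is the smaller
term. -/
lemma norm_one_add_pow_prime_sub_one {a : ℤ_[p]} (ha : ‖a‖ ^ (p - 1) < ‖(p : ℤ_[p])‖) :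
    ‖(1 + a) ^ p - 1‖ = ‖(p : ℤ_[p])‖ * ‖a‖ := by
  have hp : p.Prime := Fact.out
  rcases eq_or_ne a 0 with rfl | ha0
  · simp
  have ha1 := norm_lt_one_of_pow_lt_norm_p ha
  set S := ∑ k ∈ Finset.Ioo 0 p, a ^ (k - 1) * 1 ^ (p - k - 1) * ((p.choose k / p : ℕ) : ℤ_[p])
    with hS_def
  have hS : ‖S - 1‖ < 1 := by
    rw [hS_def, ← Finset.add_sum_erase _ _ (show 1 ∈ Finset.Ioo 0 p by simp [hp.one_lt])]
    simp only [Nat.sub_self, pow_zero, one_pow, Nat.choose_one_right, Nat.div_self hp.pos,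
      Nat.cast_one, one_mul, add_sub_cancel_left]
    refine (IsUltrametricDist.norm_sum_le_of_forall_le_of_nonneg (norm_nonneg a) ?_).trans_lt ha1
    intro k hk
    obtain ⟨hk1, hk0, -⟩ : k ≠ 1 ∧ 0 < k ∧ k < p := by simpa using hk
    rw [mul_one, norm_mul, norm_pow]
    calc ‖a‖ ^ (k - 1) * ‖((p.choose k / p : ℕ) : ℤ_[p])‖ ≤ ‖a‖ * 1 :=
          mul_le_mul (pow_le_of_le_one (norm_nonneg a) ha1.le (by omega)) (norm_le_one _)
            (norm_nonneg _) (norm_nonneg _)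
      _ = ‖a‖ := mul_one _
  have hS1 : ‖S‖ = 1 := by
    have := IsUltrametricDist.norm_add_eq_max_of_norm_ne_norm (x := S - 1) (y := 1)
      (by rw [norm_one]; exact hS.ne)
    rwa [sub_add_cancel, norm_one, max_eq_right hS.le] at this
  have hsplit : (1 + a) ^ p - 1 = p * a * S + a ^ p := by
    rw [add_comm 1 a, add_pow_prime_eq hp]; ring
  have hlt : ‖a ^ p‖ < ‖(p : ℤ_[p]) * a * S‖ := by
    rw [norm_mul, norm_mul, hS1, mul_one, norm_pow, mul_comm ‖(p : ℤ_[p])‖]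
    calc ‖a‖ ^ p = ‖a‖ * ‖a‖ ^ (p - 1) := by rw [← pow_succ', Nat.sub_add_cancel hp.one_le]
      _ < ‖a‖ * ‖(p : ℤ_[p])‖ := mul_lt_mul_of_pos_left ha (norm_pos_iff.mpr ha0)
  rw [hsplit, IsUltrametricDist.norm_add_eq_max_of_norm_ne_norm hlt.ne', max_eq_left hlt.le,
    norm_mul, norm_mul, hS1, mul_one]

lemma norm_pow_p_pow_sub_one {w : ℤ_[p]} (hw : ‖w - 1‖ ^ (p - 1) < ‖(p : ℤ_[p])‖) (k : ℕ) :
    ‖w ^ p ^ k - 1‖ = ‖(p : ℤ_[p])‖ ^ k * ‖w - 1‖ := by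
  induction k with
  | zero => simp
  | succ k ih =>
    have hle : ‖w ^ p ^ k - 1‖ ≤ ‖w - 1‖ := by
      rw [ih]
      exact mul_le_of_le_one_left (norm_nonneg _) (pow_le_one₀ (norm_nonneg _) (norm_le_one _))
    have h := norm_one_add_pow_prime_sub_one (a := w ^ p ^ k - 1)
      ((pow_le_pow_left₀ (norm_nonneg _) hle _).trans_lt hw)
    rw [add_sub_cancel, ← pow_mul, ← pow_succ, ih] at h
    rw [h, pow_succ]; ring

lemma norm_mul_sub_one_le_max (u v : ℤ_[p]ˣ) :
    ‖((u * v : ℤ_[p]ˣ) : ℤ_[p]) - 1‖ ≤ max ‖(v : ℤ_[p]) - 1‖ ‖(u : ℤ_[p]) - 1‖ := by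
  rw [Units.val_mul, show (u : ℤ_[p]) * v - 1 = u * (v - 1) + (u - 1) by ring]
  refine (IsUltrametricDist.norm_add_le_max _ _).trans_eq ?_
  rw [norm_mul, norm_units, one_mul]

/-- `x ↦ w ^ x` for a principal unit `w`, i.e. `‖w - 1‖ < 1`; the trivial character otherwise. -/
noncomputable def unitsPow (w : ℤ_[p]ˣ) : AddChar ℤ_[p] ℤ_[p]ˣ :=
  if hw : ‖(w : ℤ_[p]) - 1‖ < 1 then
    AddChar.toMonoidHomEquiv.symm (addChar_of_value_at_one (p := p) ((w : ℤ_[p]) - 1)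
      (tendsto_pow_atTop_nhds_zero_iff_norm_lt_one.mpr hw)).toMonoidHom.toHomUnits
  else 1

section unitsPow

variable {w : ℤ_[p]ˣ}

lemma coe_unitsPow (hw : ‖(w : ℤ_[p]) - 1‖ < 1) (x : ℤ_[p]) :
    (unitsPow w x : ℤ_[p]) = addChar_of_value_at_one ((w : ℤ_[p]) - 1)
      (tendsto_pow_atTop_nhds_zero_iff_norm_lt_one.mpr hw) x := by
  rw [unitsPow, dif_pos hw]; rfl

lemma unitsPow_of_not_norm_lt_one (hw : ¬‖(w : ℤ_[p]) - 1‖ < 1) : unitsPow w = 1 := dif_neg hw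

lemma continuous_unitsPow (w : ℤ_[p]ˣ) : Continuous (unitsPow w) := by
  by_cases hw : ‖(w : ℤ_[p]) - 1‖ < 1
  · have hκ := continuous_addChar_of_value_at_one (p := p)
      (tendsto_pow_atTop_nhds_zero_iff_norm_lt_one.mpr hw)
    refine Units.continuous_iff.mpr ⟨?_, ?_⟩
    · simpa only [Function.comp_def, coe_unitsPow hw] using hκ
    · simpa only [← AddChar.map_neg_eq_inv, coe_unitsPow hw] using hκ.comp' continuous_neg
  · rw [unitsPow_of_not_norm_lt_one hw]; exact continuous_const

lemma unitsPow_one (hw : ‖(w : ℤ_[p]) - 1‖ < 1) : unitsPow w 1 = w := by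
  ext; simp [coe_unitsPow hw]

lemma unitsPow_natCast (hw : ‖(w : ℤ_[p]) - 1‖ < 1) (n : ℕ) : unitsPow w n = w ^ n := by
  rw [← nsmul_one, AddChar.map_nsmul_eq_pow, unitsPow_one hw]

lemma eq_unitsPow (hw : ‖(w : ℤ_[p]) - 1‖ < 1) {κ : AddChar ℤ_[p] ℤ_[p]ˣ} (hκ : Continuous κ)
    (h : κ 1 = w) : κ = unitsPow w :=
  denseRange_natCast.addChar_eq_of_eval_one_eq hκ (continuous_unitsPow w)
    (by rw [h, unitsPow_one hw])

lemma norm_unitsPow_sub_linear_le (hw : ‖(w : ℤ_[p]) - 1‖ < 1) (x : ℤ_[p]) :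
    ‖(unitsPow w x : ℤ_[p]) - (1 + ((w : ℤ_[p]) - 1) * x)‖ ≤ ‖(w : ℤ_[p]) - 1‖ ^ 2 := by
  refine denseRange_natCast.induction_on x (isClosed_le ?_ continuous_const) fun n ↦ ?_
  · exact continuous_norm.comp ((Units.continuous_val.comp (continuous_unitsPow w)).sub
      (continuous_const.add (continuous_const.mul continuous_id)))
  obtain ⟨c, hc⟩ := sq_dvd_add_pow_sub_sub ((w : ℤ_[p]) - 1) 1 n
  have : (unitsPow w n : ℤ_[p]) - (1 + ((w : ℤ_[p]) - 1) * n) = ((w : ℤ_[p]) - 1) ^ 2 * c := by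
    rw [← hc, unitsPow_natCast hw, Units.val_pow_eq_pow_val]; ring
  rw [this, norm_mul, norm_pow]
  exact mul_le_of_le_one_right (by positivity) (norm_le_one c)

lemma norm_unitsPow_sub_one_le (x : ℤ_[p]) :
    ‖(unitsPow w x : ℤ_[p]) - 1‖ ≤ ‖(w : ℤ_[p]) - 1‖ := by
  by_cases hw : ‖(w : ℤ_[p]) - 1‖ < 1
  · have hlin : ‖((w : ℤ_[p]) - 1) * x‖ ≤ ‖(w : ℤ_[p]) - 1‖ := by
      rw [norm_mul]; exact mul_le_of_le_one_right (norm_nonneg _) (norm_le_one x)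
    calc ‖(unitsPow w x : ℤ_[p]) - 1‖
        = ‖((unitsPow w x : ℤ_[p]) - (1 + ((w : ℤ_[p]) - 1) * x)) + ((w : ℤ_[p]) - 1) * x‖ := by
          ring_nf
      _ ≤ ‖(w : ℤ_[p]) - 1‖ :=
          (IsUltrametricDist.norm_add_le_max _ _).trans (max_le
            ((norm_unitsPow_sub_linear_le hw x).trans
              (pow_le_of_le_one (norm_nonneg _) hw.le two_ne_zero)) hlin)
  · simp [unitsPow_of_not_norm_lt_one hw]

lemma norm_unitsPow_sub_one_lt_one (w : ℤ_[p]ˣ) (x : ℤ_[p]) :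
    ‖(unitsPow w x : ℤ_[p]) - 1‖ < 1 := by
  by_cases hw : ‖(w : ℤ_[p]) - 1‖ < 1
  · exact (norm_unitsPow_sub_one_le x).trans_lt hw
  · simp [unitsPow_of_not_norm_lt_one hw]

lemma norm_unitsPow_sub_one_of_norm_eq_one (hw : ‖(w : ℤ_[p]) - 1‖ < 1) {x : ℤ_[p]}
    (hx : ‖x‖ = 1) : ‖(unitsPow w x : ℤ_[p]) - 1‖ = ‖(w : ℤ_[p]) - 1‖ := by
  rcases eq_or_ne ‖(w : ℤ_[p]) - 1‖ 0 with h0 | h0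
  · exact h0 ▸ le_antisymm (h0 ▸ norm_unitsPow_sub_one_le x) (norm_nonneg _)
  have hsq : ‖(w : ℤ_[p]) - 1‖ ^ 2 < ‖((w : ℤ_[p]) - 1) * x‖ := by
    rw [norm_mul, hx, mul_one]
    exact pow_lt_self_of_lt_one₀ ((norm_nonneg _).lt_of_ne' h0) hw one_lt_two
  have hlt := (norm_unitsPow_sub_linear_le hw x).trans_lt hsq
  calc ‖(unitsPow w x : ℤ_[p]) - 1‖
      = ‖((unitsPow w x : ℤ_[p]) - (1 + ((w : ℤ_[p]) - 1) * x)) + ((w : ℤ_[p]) - 1) * x‖ := by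
        ring_nf
    _ = ‖(w : ℤ_[p]) - 1‖ := by
        rw [IsUltrametricDist.norm_add_eq_max_of_norm_ne_norm hlt.ne, max_eq_right hlt.le,
          norm_mul, hx, mul_one]

lemma unitsPow_mul (x y : ℤ_[p]) :
    unitsPow w (x * y) = unitsPow (unitsPow w x) y :=
  DFunLike.congr_fun (eq_unitsPow (norm_unitsPow_sub_one_lt_one w x)
    (κ := (unitsPow w).compAddMonoidHom (AddMonoidHom.mulLeft x))
    ((continuous_unitsPow w).comp (continuous_const_mul x)) (by simp)) y

lemma mul_unitsPow {w' : ℤ_[p]ˣ} (hw : ‖(w : ℤ_[p]) - 1‖ < 1)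
    (hw' : ‖(w' : ℤ_[p]) - 1‖ < 1) (x : ℤ_[p]) :
    unitsPow (w * w') x = unitsPow w x * unitsPow w' x := by
  have hww' := (norm_mul_sub_one_le_max w w').trans_lt (max_lt hw' hw)
  exact (DFunLike.congr_fun (eq_unitsPow hww' (κ := unitsPow w * unitsPow w')
    ((continuous_unitsPow w).mul
    (continuous_unitsPow w')) (by simp [unitsPow_one hw, unitsPow_one hw'])) x).symm

lemma map_unitsPow {f : ℤ_[p]ˣ →* ℤ_[p]ˣ} (hf : Continuous f) (hw : ‖(w : ℤ_[p]) - 1‖ < 1)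
    (hfw : ‖(f w : ℤ_[p]) - 1‖ < 1) (x : ℤ_[p]) : f (unitsPow w x) = unitsPow (f w) x :=
  DFunLike.congr_fun (eq_unitsPow hfw (κ := f.compAddChar (unitsPow w))
    (hf.comp (continuous_unitsPow w)) (by simp [unitsPow_one hw])) x

end unitsPow

section log

variable {w : ℤ_[p]ˣ}

lemma norm_unitsPow_sub_one (hw : ‖(w : ℤ_[p]) - 1‖ ^ (p - 1) < ‖(p : ℤ_[p])‖) (x : ℤ_[p]) :
    ‖(unitsPow w x : ℤ_[p]) - 1‖ = ‖x‖ * ‖(w : ℤ_[p]) - 1‖ := by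
  rcases eq_or_ne x 0 with rfl | hx
  · simp
  rw [unitCoeff_spec hx, mul_comm, unitsPow_mul, norm_unitsPow_sub_one_of_norm_eq_one
    (norm_unitsPow_sub_one_lt_one w _) (norm_units _), norm_mul, norm_units, mul_one,
    ← Nat.cast_pow, unitsPow_natCast (norm_lt_one_of_pow_lt_norm_p hw), Units.val_pow_eq_pow_val,
    norm_pow_p_pow_sub_one hw, Nat.cast_pow, norm_pow]

lemma unitsPow_injective (hw : ‖(w : ℤ_[p]) - 1‖ ^ (p - 1) < ‖(p : ℤ_[p])‖) (hw1 : w ≠ 1) :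
    Function.Injective (unitsPow w) := by
  intro x y hxy
  have h1 : unitsPow w (x - y) = 1 := by
    rw [sub_eq_add_neg, AddChar.map_add_eq_mul, AddChar.map_neg_eq_inv, hxy, mul_inv_cancel]
  have h := norm_unitsPow_sub_one hw (x - y)
  rw [h1, Units.val_one, sub_self, norm_zero, eq_comm, mul_eq_zero, norm_eq_zero, norm_eq_zero,
    sub_eq_zero, sub_eq_zero, ← Units.val_one, Units.val_inj] at h
  exact h.resolve_right hw1

/-- If `u ≡ w ^ x` up to `‖p‖ ^ k ‖w - 1‖`, then `u w ^ (-x) - 1` is a multiple `q (w ^ p ^ k - 1)`,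
and `w ^ (x + p ^ k q)` is one step closer. -/
lemma exists_norm_sub_unitsPow_le (hw : ‖(w : ℤ_[p]) - 1‖ ^ (p - 1) < ‖(p : ℤ_[p])‖)
    (hw1 : w ≠ 1) {u : ℤ_[p]ˣ} (hu : ‖(u : ℤ_[p]) - 1‖ ≤ ‖(w : ℤ_[p]) - 1‖) (k : ℕ) :
    ∃ x, ‖(u : ℤ_[p]) - unitsPow w x‖ ≤ ‖(p : ℤ_[p])‖ ^ k * ‖(w : ℤ_[p]) - 1‖ := by
  induction k with
  | zero => exact ⟨0, by simpa using hu⟩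
  | succ k ih =>
    obtain ⟨x, hx⟩ := ih
    set v := unitsPow w ((p : ℤ_[p]) ^ k)
    have hv : ‖(v : ℤ_[p]) - 1‖ = ‖(p : ℤ_[p])‖ ^ k * ‖(w : ℤ_[p]) - 1‖ := by
      rw [norm_unitsPow_sub_one hw, norm_pow]
    obtain ⟨z, hzu⟩ : ∃ z, u = unitsPow w x * z := ⟨_, (mul_inv_cancel_left _ u).symm⟩
    have hz : ‖(z : ℤ_[p]) - 1‖ ≤ ‖(v : ℤ_[p]) - 1‖ := by
      rwa [hv, ← one_mul ‖(z : ℤ_[p]) - 1‖, ← norm_units (unitsPow w x), ← norm_mul,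
        mul_sub_one, ← Units.val_mul, ← hzu]
    have hv0 : (v : ℤ_[p]) - 1 ≠ 0 := by
      rw [← norm_pos_iff, hv]
      exact mul_pos (pow_pos norm_p_pos k)
        (norm_pos_iff.mpr (sub_ne_zero.mpr (Units.val_eq_one.not.mpr hw1)))
    obtain ⟨q, hq⟩ := dvd_of_norm_le hv0 hz
    refine ⟨x + (p : ℤ_[p]) ^ k * q, ?_⟩
    have hvp : ‖(v : ℤ_[p]) - 1‖ ≤ ‖(p : ℤ_[p])‖ :=
      (norm_unitsPow_sub_one_le _).trans
        (norm_le_norm_p_of_norm_lt_one (norm_lt_one_of_pow_lt_norm_p hw))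
    have hvq : ‖(unitsPow v q : ℤ_[p]) - z‖ ≤ ‖(v : ℤ_[p]) - 1‖ ^ 2 := by
      have := norm_unitsPow_sub_linear_le (w := v) (norm_unitsPow_sub_one_lt_one w _) q
      rwa [← hq, add_sub_cancel] at this
    rw [AddChar.map_add_eq_mul, unitsPow_mul, hzu, Units.val_mul, Units.val_mul, ← mul_sub,
      norm_mul, norm_units, one_mul, norm_sub_rev, pow_succ, mul_right_comm, ← hv]
    exact hvq.trans (by rw [sq]; exact mul_le_mul_of_nonneg_left hvp (norm_nonneg _))

lemma exists_unitsPow_eq (hw : ‖(w : ℤ_[p]) - 1‖ ^ (p - 1) < ‖(p : ℤ_[p])‖) {u : ℤ_[p]ˣ}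
    (hu : ‖(u : ℤ_[p]) - 1‖ ≤ ‖(w : ℤ_[p]) - 1‖) : ∃ x, unitsPow w x = u := by
  rcases eq_or_ne w 1 with rfl | hw1
  · refine ⟨0, Units.ext ?_⟩
    rw [AddChar.map_zero_eq_one, Units.val_one, eq_comm, ← sub_eq_zero, ← norm_le_zero_iff]
    simpa using hu
  have hclosed : IsClosed (Set.range fun x ↦ (unitsPow w x : ℤ_[p])) :=
    (isCompact_range (Units.continuous_val.comp (continuous_unitsPow w))).isClosed
  have hmem : (u : ℤ_[p]) ∈ closure (Set.range fun x ↦ (unitsPow w x : ℤ_[p])) := by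
    refine Metric.mem_closure_iff.mpr fun ε hε ↦ ?_
    have hlim : Tendsto (fun k : ℕ ↦ ‖(p : ℤ_[p])‖ ^ k * ‖(w : ℤ_[p]) - 1‖) atTop (𝓝 0) := by
      simpa only [zero_mul] using (tendsto_pow_atTop_nhds_zero_of_lt_one
        (norm_nonneg (p : ℤ_[p])) norm_p_lt_one).mul_const ‖(w : ℤ_[p]) - 1‖
    obtain ⟨k, hk⟩ := (hlim.eventually (gt_mem_nhds hε)).exists
    obtain ⟨x, hx⟩ := exists_norm_sub_unitsPow_le hw hw1 hu k
    exact ⟨_, ⟨x, rfl⟩, (dist_eq_norm _ _).trans_lt (hx.trans_lt hk)⟩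
  obtain ⟨x, hx⟩ := hclosed.closure_eq ▸ hmem
  exact ⟨x, Units.ext hx⟩

/-- `log_w`; a left inverse of `unitsPow w` on its image `{u | ‖u - 1‖ ≤ ‖w - 1‖}`. -/
noncomputable def unitsLog (w : ℤ_[p]ˣ) : ℤ_[p]ˣ → ℤ_[p] := Function.invFun (unitsPow w)

lemma unitsPow_unitsLog (hw : ‖(w : ℤ_[p]) - 1‖ ^ (p - 1) < ‖(p : ℤ_[p])‖) {u : ℤ_[p]ˣ}
    (hu : ‖(u : ℤ_[p]) - 1‖ ≤ ‖(w : ℤ_[p]) - 1‖) :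
    unitsPow w (unitsLog w u) = u :=
  Function.invFun_eq (exists_unitsPow_eq hw hu)

lemma unitsLog_unitsPow (hw : ‖(w : ℤ_[p]) - 1‖ ^ (p - 1) < ‖(p : ℤ_[p])‖) (hw1 : w ≠ 1)
    (x : ℤ_[p]) : unitsLog w (unitsPow w x) = x :=
  Function.leftInverse_invFun (unitsPow_injective hw hw1) x

lemma unitsLog_eq_iff (hw : ‖(w : ℤ_[p]) - 1‖ ^ (p - 1) < ‖(p : ℤ_[p])‖) (hw1 : w ≠ 1) {u : ℤ_[p]ˣ}
    (hu : ‖(u : ℤ_[p]) - 1‖ ≤ ‖(w : ℤ_[p]) - 1‖) {x : ℤ_[p]} :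
    unitsLog w u = x ↔ unitsPow w x = u := by
  rw [← unitsPow_injective hw hw1 |>.eq_iff, unitsPow_unitsLog hw hu, eq_comm]

lemma _root_.Continuous.unitsLog (hw : ‖(w : ℤ_[p]) - 1‖ ^ (p - 1) < ‖(p : ℤ_[p])‖) (hw1 : w ≠ 1)
    {X : Type*} [TopologicalSpace X] {f : X → ℤ_[p]ˣ}
    (hf : Continuous f) (hfw : ∀ x, ‖(f x : ℤ_[p]) - 1‖ ≤ ‖(w : ℤ_[p]) - 1‖) :
    Continuous fun x ↦ PadicInt.unitsLog w (f x) := by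
  refine ((continuous_unitsPow w).isClosedEmbedding
    (unitsPow_injective hw hw1)).continuous_iff.mpr ?_
  simpa only [Function.comp_def, unitsPow_unitsLog hw (hfw _)] using hf

lemma eq_of_pow_eq_pow (hw : ‖(w : ℤ_[p]) - 1‖ ^ (p - 1) < ‖(p : ℤ_[p])‖) (hw1 : w ≠ 1)
    {u v : ℤ_[p]ˣ} (hu : ‖(u : ℤ_[p]) - 1‖ ≤ ‖(w : ℤ_[p]) - 1‖)
    (hv : ‖(v : ℤ_[p]) - 1‖ ≤ ‖(w : ℤ_[p]) - 1‖) {n : ℕ} (hn : n ≠ 0) (h : u ^ n = v ^ n) :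
    u = v := by
  rw [← unitsPow_unitsLog hw hu, ← unitsPow_unitsLog hw hv, ← AddChar.map_nsmul_eq_pow,
    ← AddChar.map_nsmul_eq_pow] at h
  rw [← unitsPow_unitsLog hw hu, ← unitsPow_unitsLog hw hv,
    smul_right_injective ℤ_[p] hn (unitsPow_injective hw hw1 h)]

end log

lemma isUnit_one_add_of_norm_lt_one {x : ℤ_[p]} (hx : ‖x‖ < 1) : IsUnit (1 + x) := by
  simpa using IsLocalRing.isUnit_one_sub_self_of_mem_nonunits (-x)
    (mem_nonunits.mpr (by rwa [norm_neg]))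

lemma norm_lt_one_iff_toZMod_eq_zero {x : ℤ_[p]} : ‖x‖ < 1 ↔ toZMod x = 0 := by
  rw [← mem_nonunits, ← IsLocalRing.mem_maximalIdeal, ← ker_toZMod, RingHom.mem_ker]

lemma norm_pow_pred_sub_one_lt_one (u : ℤ_[p]ˣ) : ‖(u : ℤ_[p]) ^ (p - 1) - 1‖ < 1 := by
  rw [norm_lt_one_iff_toZMod_eq_zero, map_sub, map_pow, map_one,
    ZMod.pow_card_sub_one_eq_one (u.isUnit.map toZMod).ne_zero, sub_self]

lemma isUnit_natCast_p_sub_one : IsUnit ((p - 1 : ℕ) : ℤ_[p]) :=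
  isUnit_iff.mpr norm_natCast_p_sub_one

section Odd

noncomputable def oneAddP : ℤ_[p]ˣ := (isUnit_one_add_of_norm_lt_one norm_p_lt_one).unit

lemma norm_oneAddP_sub_one : ‖((oneAddP : ℤ_[p]ˣ) : ℤ_[p]) - 1‖ = ‖(p : ℤ_[p])‖ := by
  simp [oneAddP]

lemma oneAddP_ne_one : (oneAddP : ℤ_[p]ˣ) ≠ 1 := fun h ↦
  norm_p_pos.ne' (by simpa [h] using (norm_oneAddP_sub_one (p := p)).symm)

lemma norm_oneAddP_sub_one_pow_lt (hp : Odd p) :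
    ‖((oneAddP : ℤ_[p]ˣ) : ℤ_[p]) - 1‖ ^ (p - 1) < ‖(p : ℤ_[p])‖ := by
  have h3 : 1 < p - 1 := by
    have := (Fact.out : p.Prime).two_le
    obtain ⟨k, rfl⟩ := hp
    omega
  rw [norm_oneAddP_sub_one]
  exact pow_lt_self_of_lt_one₀ norm_p_pos norm_p_lt_one h3

lemma norm_sub_one_le_norm_oneAddP_sub_one {x : ℤ_[p]} (hx : ‖x‖ < 1) :
    ‖x‖ ≤ ‖((oneAddP : ℤ_[p]ˣ) : ℤ_[p]) - 1‖ :=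
  norm_oneAddP_sub_one (p := p) ▸ norm_le_norm_p_of_norm_lt_one hx

/-- Raising to the power `p - 1` kills the roots of unity in `ℤ_pˣ`. -/
noncomputable def logPowPred (u : ℤ_[p]ˣ) : ℤ_[p] := unitsLog oneAddP (u ^ (p - 1))

lemma norm_pow_pred_sub_one_le (u : ℤ_[p]ˣ) :
    ‖((u ^ (p - 1) : ℤ_[p]ˣ) : ℤ_[p]) - 1‖ ≤ ‖((oneAddP : ℤ_[p]ˣ) : ℤ_[p]) - 1‖ := by
  rw [Units.val_pow_eq_pow_val]
  exact norm_sub_one_le_norm_oneAddP_sub_one (norm_pow_pred_sub_one_lt_one u)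

lemma unitsPow_logPowPred (hp : Odd p) (u : ℤ_[p]ˣ) :
    unitsPow oneAddP (logPowPred u) = u ^ (p - 1) :=
  unitsPow_unitsLog (norm_oneAddP_sub_one_pow_lt hp) (norm_pow_pred_sub_one_le u)

lemma logPowPred_mul (hp : Odd p) (u v : ℤ_[p]ˣ) :
    logPowPred (u * v) = logPowPred u + logPowPred v := by
  rw [logPowPred, unitsLog_eq_iff (norm_oneAddP_sub_one_pow_lt hp) oneAddP_ne_one
    (norm_pow_pred_sub_one_le _), AddChar.map_add_eq_mul, unitsPow_logPowPred hp,
    unitsPow_logPowPred hp, mul_pow]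

lemma continuous_logPowPred (hp : Odd p) : Continuous (logPowPred (p := p)) :=
  (continuous_pow (p - 1)).unitsLog (norm_oneAddP_sub_one_pow_lt hp) oneAddP_ne_one
    norm_pow_pred_sub_one_le

lemma logPowPred_oneAddP (hp : Odd p) : logPowPred (oneAddP : ℤ_[p]ˣ) = ((p - 1 : ℕ) : ℤ_[p]) := by
  rw [logPowPred, unitsLog_eq_iff (norm_oneAddP_sub_one_pow_lt hp) oneAddP_ne_one
    (norm_pow_pred_sub_one_le _), unitsPow_natCast
    (norm_lt_one_of_pow_lt_norm_p (norm_oneAddP_sub_one_pow_lt hp))]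

end Odd

section Two

lemma norm_units_two_sub_one_lt_one (u : ℤ_[2]ˣ) : ‖(u : ℤ_[2]) - 1‖ < 1 := by
  simpa using norm_pow_pred_sub_one_lt_one u

noncomputable def five : ℤ_[2]ˣ :=
  (isUnit_one_add_of_norm_lt_one (x := ((2 : ℕ) : ℤ_[2]) ^ 2)
    (by rw [norm_pow]; exact pow_lt_one₀ (norm_nonneg _) norm_p_lt_one two_ne_zero)).unit

lemma norm_five_sub_one : ‖((five : ℤ_[2]ˣ) : ℤ_[2]) - 1‖ = ‖((2 : ℕ) : ℤ_[2])‖ ^ 2 := by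
  rw [five, IsUnit.unit_spec, add_sub_cancel_left, norm_pow]

lemma norm_five_sub_one_pow_lt :
    ‖((five : ℤ_[2]ˣ) : ℤ_[2]) - 1‖ ^ (2 - 1) < ‖((2 : ℕ) : ℤ_[2])‖ := by
  rw [norm_five_sub_one, pow_one]
  exact pow_lt_self_of_lt_one₀ norm_p_pos norm_p_lt_one one_lt_two

lemma five_ne_one : five ≠ 1 := fun h ↦
  (pow_pos (norm_p_pos (p := 2)) 2).ne' (by simpa [h] using norm_five_sub_one.symm)

lemma norm_sub_one_le_or_norm_add_one_le (u : ℤ_[2]ˣ) :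
    ‖(u : ℤ_[2]) - 1‖ ≤ ‖((five : ℤ_[2]ˣ) : ℤ_[2]) - 1‖ ∨
      ‖(u : ℤ_[2]) + 1‖ ≤ ‖((five : ℤ_[2]ˣ) : ℤ_[2]) - 1‖ := by
  obtain ⟨t, ht⟩ := (norm_lt_one_iff_dvd _).mp (norm_units_two_sub_one_lt_one u)
  have hbound {s : ℤ_[2]} (hs : ‖s‖ < 1) :
      ‖((2 : ℕ) : ℤ_[2]) * s‖ ≤ ‖((five : ℤ_[2]ˣ) : ℤ_[2]) - 1‖ := by
    rw [norm_five_sub_one, norm_mul, sq]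
    exact mul_le_mul_of_nonneg_left (norm_le_norm_p_of_norm_lt_one hs) (norm_nonneg _)
  have hu : (u : ℤ_[2]) + 1 = ((2 : ℕ) : ℤ_[2]) * (t + 1) := by
    rw [mul_add, ← ht]; push_cast; ring
  rw [ht, hu]
  simp only [norm_lt_one_iff_toZMod_eq_zero] at hbound
  rcases (by decide : ∀ z : ZMod 2, z = 0 ∨ z + 1 = 0) (toZMod t) with h | h
  · exact .inl (hbound h)
  · exact .inr (hbound (by rwa [map_add, map_one]))

lemma not_norm_sub_one_le_and_norm_add_one_le (u : ℤ_[2]ˣ) :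
    ¬(‖(u : ℤ_[2]) - 1‖ ≤ ‖((five : ℤ_[2]ˣ) : ℤ_[2]) - 1‖ ∧
      ‖(u : ℤ_[2]) + 1‖ ≤ ‖((five : ℤ_[2]ˣ) : ℤ_[2]) - 1‖) := by
  rintro ⟨h₁, h₂⟩
  have h : ‖((u : ℤ_[2]) + 1) + -((u : ℤ_[2]) - 1)‖ ≤ ‖((five : ℤ_[2]ˣ) : ℤ_[2]) - 1‖ :=
    (IsUltrametricDist.norm_add_le_max _ _).trans (max_le h₂ (by rwa [norm_neg]))
  rw [show (u : ℤ_[2]) + 1 + -((u : ℤ_[2]) - 1) = ((2 : ℕ) : ℤ_[2]) by push_cast; ring,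
    norm_five_sub_one] at h
  exact (pow_lt_self_of_lt_one₀ norm_p_pos norm_p_lt_one one_lt_two).not_ge h

noncomputable def negOnePow : AddChar (ZMod 2) ℤ_[2]ˣ := AddChar.zmodChar 2 neg_one_sq

@[simp] lemma negOnePow_zero : negOnePow 0 = 1 := AddChar.map_zero_eq_one _

@[simp] lemma negOnePow_one : negOnePow 1 = -1 := pow_one _

lemma norm_negOnePow_one_mul_sub_one (u : ℤ_[2]ˣ) :
    ‖((negOnePow 1 * u : ℤ_[2]ˣ) : ℤ_[2]) - 1‖ = ‖(u : ℤ_[2]) + 1‖ := by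
  rw [negOnePow_one, neg_one_mul, Units.val_neg, ← neg_add', norm_neg]

lemma negOnePow_mul_self (d : ZMod 2) : negOnePow d * negOnePow d = 1 := by
  rw [← AddChar.map_add_eq_mul, CharTwo.add_self_eq_zero, negOnePow_zero]

/-- `0` on `1 + 4ℤ₂` and `1` on `-1 + 4ℤ₂`. -/
noncomputable def signTwo (u : ℤ_[2]ˣ) : ZMod 2 :=
  if ‖(u : ℤ_[2]) - 1‖ ≤ ‖((five : ℤ_[2]ˣ) : ℤ_[2]) - 1‖ then 0 else 1

lemma signTwo_eq_of_norm_le {u : ℤ_[2]ˣ} {d : ZMod 2}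
    (h : ‖((negOnePow d * u : ℤ_[2]ˣ) : ℤ_[2]) - 1‖ ≤ ‖((five : ℤ_[2]ˣ) : ℤ_[2]) - 1‖) :
    signTwo u = d := by
  obtain rfl | rfl := (by decide : ∀ d : ZMod 2, d = 0 ∨ d = 1) d
  · rw [negOnePow_zero, one_mul] at h
    exact if_pos h
  · rw [norm_negOnePow_one_mul_sub_one] at h
    exact if_neg fun h' ↦ not_norm_sub_one_le_and_norm_add_one_le u ⟨h', h⟩

lemma norm_negOnePow_signTwo_mul_sub_one_le (u : ℤ_[2]ˣ) :
    ‖((negOnePow (signTwo u) * u : ℤ_[2]ˣ) : ℤ_[2]) - 1‖ ≤ ‖((five : ℤ_[2]ˣ) : ℤ_[2]) - 1‖ := by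
  unfold signTwo
  split_ifs with h
  · rwa [negOnePow_zero, one_mul]
  · rw [norm_negOnePow_one_mul_sub_one]
    exact (norm_sub_one_le_or_norm_add_one_le u).resolve_left h

lemma signTwo_mul (u v : ℤ_[2]ˣ) : signTwo (u * v) = signTwo u + signTwo v := by
  refine signTwo_eq_of_norm_le ?_
  rw [AddChar.map_add_eq_mul, mul_mul_mul_comm]
  exact (norm_mul_sub_one_le_max _ _).trans (max_le (norm_negOnePow_signTwo_mul_sub_one_le v)
    (norm_negOnePow_signTwo_mul_sub_one_le u))

lemma continuous_signTwo : Continuous signTwo := by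
  have hV : IsClopen {u : ℤ_[2]ˣ | ‖(u : ℤ_[2]) - 1‖ ≤ ‖((five : ℤ_[2]ˣ) : ℤ_[2]) - 1‖} := by
    have := (IsUltrametricDist.isClopen_closedBall (1 : ℤ_[2])
      (norm_pos_iff.mpr (sub_ne_zero.mpr (Units.val_eq_one.not.mpr five_ne_one))).ne').preimage
        Units.continuous_val
    simpa only [Set.preimage, Metric.mem_closedBall, dist_eq_norm] using this
  exact continuous_if (by simp [hV.frontier_eq]) continuousOn_const continuousOn_const

noncomputable def logFive (u : ℤ_[2]ˣ) : ℤ_[2] := unitsLog five (negOnePow (signTwo u) * u)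

lemma negOnePow_signTwo_mul_unitsPow_logFive (u : ℤ_[2]ˣ) :
    negOnePow (signTwo u) * unitsPow five (logFive u) = u := by
  rw [logFive, unitsPow_unitsLog norm_five_sub_one_pow_lt (norm_negOnePow_signTwo_mul_sub_one_le u),
    ← mul_assoc, negOnePow_mul_self, one_mul]

lemma signTwo_negOnePow_mul_unitsPow (d : ZMod 2) (x : ℤ_[2]) :
    signTwo (negOnePow d * unitsPow five x) = d :=
  signTwo_eq_of_norm_le (by
    rw [← mul_assoc, negOnePow_mul_self, one_mul]; exact norm_unitsPow_sub_one_le x)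

lemma signTwo_negOnePow (d : ZMod 2) : signTwo (negOnePow d) = d := by
  simpa using signTwo_negOnePow_mul_unitsPow d 0

lemma logFive_negOnePow_mul_unitsPow (d : ZMod 2) (x : ℤ_[2]) :
    logFive (negOnePow d * unitsPow five x) = x := by
  rw [logFive, signTwo_negOnePow_mul_unitsPow, ← mul_assoc, negOnePow_mul_self, one_mul,
    unitsLog_unitsPow norm_five_sub_one_pow_lt five_ne_one]

lemma logFive_mul (u v : ℤ_[2]ˣ) : logFive (u * v) = logFive u + logFive v := by
  conv_lhs => rw [← negOnePow_signTwo_mul_unitsPow_logFive u,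
    ← negOnePow_signTwo_mul_unitsPow_logFive v, mul_mul_mul_comm, ← AddChar.map_add_eq_mul,
    ← AddChar.map_add_eq_mul]
  exact logFive_negOnePow_mul_unitsPow _ _

lemma continuous_logFive : Continuous logFive :=
  ((continuous_of_discreteTopology.comp continuous_signTwo).mul continuous_id).unitsLog
    norm_five_sub_one_pow_lt five_ne_one norm_negOnePow_signTwo_mul_sub_one_le

lemma neg_one_eq_negOnePow_mul_unitsPow : (-1 : ℤ_[2]ˣ) = negOnePow 1 * unitsPow five 0 := by
  simp

lemma five_eq_negOnePow_mul_unitsPow : five = negOnePow 0 * unitsPow five 1 := by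
  rw [negOnePow_zero, one_mul, unitsPow_one (norm_units_two_sub_one_lt_one five)]

lemma negOnePow_signTwo_of_sq_eq_one {σ : ℤ_[2]ˣ} (h : σ ^ 2 = 1) : negOnePow (signTwo σ) = σ := by
  have h' : (σ : ℤ_[2]) ^ 2 = 1 := by rw [← Units.val_pow_eq_pow_val, h, Units.val_one]
  rcases sq_eq_one_iff.mp h' with h₁ | h₁
  · rw [Units.val_eq_one.mp h₁, ← negOnePow_zero, signTwo_negOnePow]
  · rw [show σ = negOnePow 1 from Units.ext (by simpa using h₁), signTwo_negOnePow]

lemma map_negOnePow (f : ℤ_[2]ˣ →* ℤ_[2]ˣ) (d : ZMod 2) :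
    f (negOnePow d) = negOnePow (signTwo (f (-1)) * d) := by
  obtain rfl | rfl := (by decide : ∀ d : ZMod 2, d = 0 ∨ d = 1) d
  · simp
  · rw [mul_one, negOnePow_one, negOnePow_signTwo_of_sq_eq_one (by rw [← map_pow, neg_one_sq,
      map_one])]

end Two

end PadicInt

open PadicInt

namespace PrincipalUnitHom

variable {p : ℕ} [Fact p.Prime]

lemma ext {f g : PrincipalUnitHom p} (h : ∀ u, f.1 u = g.1 u) : f = g :=
  Subtype.ext (MonoidHom.ext h)

noncomputable def mkOdd (hp : Odd p) (a : ℤ_[p]) : PrincipalUnitHom p :=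
  ⟨MonoidHom.mk' (fun u ↦ unitsPow oneAddP (a * Ring.inverse ((p - 1 : ℕ) : ℤ_[p]) * logPowPred u))
      (fun u v ↦ by simp only [logPowPred_mul hp, mul_add, AddChar.map_add_eq_mul]),
    (continuous_unitsPow _).comp (continuous_const.mul (continuous_logPowPred hp)),
    fun _ ↦ norm_unitsPow_sub_one_lt_one _ _⟩

lemma mkOdd_apply (hp : Odd p) (a : ℤ_[p]) (u : ℤ_[p]ˣ) :
    (mkOdd hp a).1 u =
      unitsPow oneAddP (a * Ring.inverse ((p - 1 : ℕ) : ℤ_[p]) * logPowPred u) := rfl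

lemma mkOdd_add (hp : Odd p) (a b : ℤ_[p]) :
    (mkOdd hp (a + b)).1 = (mkOdd hp a).1 * (mkOdd hp b).1 :=
  MonoidHom.ext fun u ↦ by
    simp only [MonoidHom.mul_apply, mkOdd_apply, add_mul, AddChar.map_add_eq_mul]

noncomputable def equivOfOdd (hp : Odd p) : PrincipalUnitHom p ≃ ℤ_[p] where
  toFun f := unitsLog oneAddP (f.1 oneAddP)
  invFun := mkOdd hp
  left_inv f := by
    dsimp only
    have hg := norm_oneAddP_sub_one_pow_lt hp
    set a := unitsLog oneAddP (f.1 oneAddP)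
    have hf (x : ℤ_[p]) : f.1 (unitsPow oneAddP x) = unitsPow oneAddP (a * x) := by
      rw [map_unitsPow f.2.1 (norm_lt_one_of_pow_lt_norm_p hg) (f.2.2 _), unitsPow_mul,
        unitsPow_unitsLog hg (norm_sub_one_le_norm_oneAddP_sub_one (f.2.2 _))]
    refine PrincipalUnitHom.ext fun u ↦ eq_of_pow_eq_pow hg oneAddP_ne_one
      (norm_unitsPow_sub_one_le _) (norm_sub_one_le_norm_oneAddP_sub_one (f.2.2 u))
      (Nat.sub_ne_zero_of_lt (Fact.out : p.Prime).one_lt) ?_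
    calc (mkOdd hp a).1 u ^ (p - 1) = unitsPow oneAddP (a * logPowPred u) := by
          rw [mkOdd_apply, ← AddChar.map_nsmul_eq_pow, nsmul_eq_mul, ← mul_assoc,
            mul_left_comm _ a, Ring.mul_inverse_cancel _ isUnit_natCast_p_sub_one, mul_one]
      _ = f.1 (u ^ (p - 1)) := by rw [← hf, unitsPow_logPowPred hp]
      _ = f.1 u ^ (p - 1) := map_pow _ _ _
  right_inv a := (unitsLog_eq_iff (norm_oneAddP_sub_one_pow_lt hp) oneAddP_ne_one
    (norm_sub_one_le_norm_oneAddP_sub_one ((mkOdd hp a).2.2 _))).mpr (by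
      rw [mkOdd_apply, logPowPred_oneAddP hp, mul_assoc,
        Ring.inverse_mul_cancel _ isUnit_natCast_p_sub_one, mul_one])

/-- `u = (-1) ^ s · 5 ^ x ↦ (-1) ^ (e s) · ((-1) ^ d · 5 ^ a) ^ x`. -/
noncomputable def mkTwo (z : ℤ_[2] × ZMod 2 × ZMod 2) : PrincipalUnitHom 2 :=
  ⟨MonoidHom.mk' (fun u ↦ negOnePow (z.2.1 * signTwo u) *
      unitsPow (negOnePow z.2.2 * unitsPow five z.1) (logFive u))
      (fun u v ↦ by
        simp only [signTwo_mul, logFive_mul, mul_add, AddChar.map_add_eq_mul]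
        exact mul_mul_mul_comm _ _ _ _),
    ((continuous_of_discreteTopology (f := fun s : ZMod 2 ↦ negOnePow (z.2.1 * s))).comp
      continuous_signTwo).mul ((continuous_unitsPow _).comp continuous_logFive),
    fun _ ↦ norm_units_two_sub_one_lt_one _⟩

lemma mkTwo_apply (z : ℤ_[2] × ZMod 2 × ZMod 2) (u : ℤ_[2]ˣ) :
    (mkTwo z).1 u = negOnePow (z.2.1 * signTwo u) *
      unitsPow (negOnePow z.2.2 * unitsPow five z.1) (logFive u) := rfl

lemma mkTwo_add (z z' : ℤ_[2] × ZMod 2 × ZMod 2) :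
    (mkTwo (z + z')).1 = (mkTwo z).1 * (mkTwo z').1 := by
  refine MonoidHom.ext fun u ↦ ?_
  rw [MonoidHom.mul_apply, mkTwo_apply, mkTwo_apply, mkTwo_apply, Prod.fst_add, Prod.snd_add,
    Prod.fst_add, Prod.snd_add, add_mul, AddChar.map_add_eq_mul, AddChar.map_add_eq_mul,
    AddChar.map_add_eq_mul, mul_mul_mul_comm (negOnePow _), mul_unitsPow
      (norm_units_two_sub_one_lt_one _) (norm_units_two_sub_one_lt_one _), mul_mul_mul_comm]

noncomputable def equivTwo : PrincipalUnitHom 2 ≃ ℤ_[2] × ZMod 2 × ZMod 2 where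
  toFun f := (logFive (f.1 five), signTwo (f.1 (-1)), signTwo (f.1 five))
  invFun := mkTwo
  left_inv f := by
    dsimp only
    refine PrincipalUnitHom.ext fun u ↦ ?_
    rw [mkTwo_apply, negOnePow_signTwo_mul_unitsPow_logFive, ← map_negOnePow f.1,
      ← map_unitsPow f.2.1 (norm_units_two_sub_one_lt_one five) (f.2.2 five), ← map_mul,
      negOnePow_signTwo_mul_unitsPow_logFive]
  right_inv z := by
    obtain ⟨a, e, d⟩ := z
    have h₁ : (mkTwo (a, e, d)).1 (-1) = negOnePow e * unitsPow five 0 := by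
      rw [mkTwo_apply, neg_one_eq_negOnePow_mul_unitsPow, signTwo_negOnePow_mul_unitsPow,
        logFive_negOnePow_mul_unitsPow, mul_one]
      simp
    have h₅ : (mkTwo (a, e, d)).1 five = negOnePow d * unitsPow five a := by
      rw [mkTwo_apply, five_eq_negOnePow_mul_unitsPow, signTwo_negOnePow_mul_unitsPow,
        logFive_negOnePow_mul_unitsPow, mul_zero, negOnePow_zero, one_mul,
        unitsPow_one (norm_units_two_sub_one_lt_one _)]
    simp only [h₁, h₅, logFive_negOnePow_mul_unitsPow, signTwo_negOnePow_mul_unitsPow]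

end PrincipalUnitHom

/-- The group of continuous homomorphisms `ℤ_pˣ → 1 + pℤ_p` is isomorphic to `ℤ_p` for `p`
odd, and to `ℤ₂ ⊕ (ℤ/2)²` for `p = 2`; the isomorphism is a group isomorphism for the
pointwise multiplication of homomorphisms. -/
theorem stmt_5 (p : ℕ) [Fact p.Prime] :
    (Odd p → ∃ e : PrincipalUnitHom p ≃ ℤ_[p],
        ∀ a b : ℤ_[p], (e.symm (a + b)).1 = (e.symm a).1 * (e.symm b).1) ∧
    (p = 2 → ∃ e : PrincipalUnitHom 2 ≃ ℤ_[2] × ZMod 2 × ZMod 2,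
        ∀ a b : ℤ_[2] × ZMod 2 × ZMod 2,
          (e.symm (a + b)).1 = (e.symm a).1 * (e.symm b).1) :=
  ⟨fun hp ↦ ⟨PrincipalUnitHom.equivOfOdd hp, PrincipalUnitHom.mkOdd_add hp⟩,
    fun _ ↦ ⟨PrincipalUnitHom.equivTwo, PrincipalUnitHom.mkTwo_add⟩⟩
end

section
/- For $n \geq 3$, the abelianization of $\mathrm{SL}_n(\mathbb{Z})$ is trivial, i.e., $\mathrm{SL}_n(\mathbb{Z})$ is perfect. -/
/-!
Every matrix in `SLₙ(ℤ)` is a product of elementary transvections. Induct on a block `S` outside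
of which `A` is the identity: Euclid's algorithm, run with row operations inside `S`, reduces a
column `κ` of the block to a unit multiple of a basis vector; two more row operations make it the
`κ`-th basis vector, and column operations then clear row `κ`, which shrinks the block to
`S \ {κ}`. A block of size one is trivial because `det A = 1`.
For `n ≥ 3` every transvection is a commutator, `⁅e_ik(a), e_kj(1)⁆ = e_ij(a)` for a third index
`k`, so the commutator subgroup is everything.
-/

open scoped commutatorElement

namespace Matrix

variable {ι R : Type*} [DecidableEq ι] [CommRing R]

def EqOneOutside (S : Finset ι) (A : Matrix ι ι R) : Prop :=
  ∀ i j, (i ∉ S ∨ j ∉ S) → A i j = (1 : Matrix ι ι R) i j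

namespace EqOneOutside

variable {S : Finset ι} {A : Matrix ι ι R}

theorem mem_of_ne_zero (hA : EqOneOutside S A) {i κ : ι} (hκ : κ ∈ S) (h : A i κ ≠ 0) :
    i ∈ S := by
  by_contra hi
  exact h (by rw [hA i κ (.inl hi), one_apply_ne (ne_of_mem_of_not_mem hκ hi).symm])

theorem transvection_mul [Fintype ι] (hA : EqOneOutside S A) {i j : ι} (hi : i ∈ S) (hj : j ∈ S)
    (c : R) :
    EqOneOutside S (transvection i j c * A) := by
  intro k l hkl
  by_cases hk : k = i
  · subst hk
    have hl : l ∉ S := hkl.resolve_left (not_not.mpr hi)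
    rw [transvection_mul_apply_same, hA _ _ (.inr hl), hA j l (.inr hl),
      one_apply_ne (ne_of_mem_of_not_mem hj hl), mul_zero, add_zero]
  · rw [transvection_mul_apply_of_ne _ _ _ _ hk, hA k l hkl]

theorem mul_transvection [Fintype ι] (hA : EqOneOutside S A) {i j : ι} (hi : i ∈ S) (hj : j ∈ S)
    (c : R) :
    EqOneOutside S (A * transvection i j c) := by
  intro k l hkl
  by_cases hl : l = j
  · subst hl
    have hk : k ∉ S := hkl.resolve_right (not_not.mpr hj)
    rw [mul_transvection_apply_same, hA _ _ (.inl hk), hA k i (.inl hk),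
      one_apply_ne (ne_of_mem_of_not_mem hi hk).symm, mul_zero, add_zero]
  · rw [mul_transvection_apply_of_ne _ _ _ _ hl, hA k l hkl]

theorem erase (hA : EqOneOutside S A) {κ : ι} (hrow : ∀ j, A κ j = (1 : Matrix ι ι R) κ j)
    (hcol : ∀ i, A i κ = (1 : Matrix ι ι R) i κ) : EqOneOutside (S.erase κ) A := by
  intro i j hij
  by_cases hi : i = κ
  · exact hi ▸ hrow j
  by_cases hj : j = κ
  · exact hj ▸ hcol i
  exact hA i j (by simpa [Finset.mem_erase, hi, hj] using hij)

end EqOneOutside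

namespace SpecialLinearGroup

variable [Fintype ι]

theorem eq_one_of_eqOneOutside {S : Finset ι} {A : SpecialLinearGroup ι R}
    (hA : EqOneOutside S (A : Matrix ι ι R)) (hS : S.card ≤ 1) : A = 1 := by
  have hS' := Finset.card_le_one.mp hS
  have hdiag : (A : Matrix ι ι R) = diagonal fun k ↦ A k k := by
    ext k l
    by_cases hkl : k = l
    · subst hkl; simp
    · rw [diagonal_apply_ne _ hkl, hA k l ?_, one_apply_ne hkl]
      by_contra! h
      exact hkl (hS' k h.1 l h.2)
  have hdiag_one : ∀ i, A i i = 1 := by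
    intro i
    by_cases hi : i ∈ S
    · calc (A i i : R) = ∏ k : ι, (A k k : R) := by
            refine Eq.symm <|
              Finset.prod_eq_single i (fun k _ hki ↦ ?_) (absurd (Finset.mem_univ i))
            rw [hA k k (.inl fun hk ↦ hki (hS' k hk i hi)), one_apply_eq]
        _ = 1 := by rw [← det_diagonal, ← hdiag, A.2]
    · rw [hA i i (.inl hi), one_apply_eq]
  ext i j
  rw [hdiag, diagonal_apply, hdiag_one, coe_one, one_apply]

theorem exists_isUnit_col_eq_single [Nontrivial R] (A : SpecialLinearGroup ι R) (κ : ι)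
    (h : ∀ p t, p ≠ t → A p κ ≠ 0 → A t κ = 0) :
    ∃ p a, IsUnit a ∧ ∀ i, A i κ = (Pi.single p a : ι → R) i := by
  have hsum : ∑ i, adjugate A κ i * A i κ = 1 := by
    simpa [mul_apply, A.2] using congr_fun₂ (adjugate_mul (A : Matrix ι ι R)) κ κ
  by_cases hex : ∃ p, A p κ ≠ 0
  · obtain ⟨p, hp⟩ := hex
    have hzero : ∀ i, i ≠ p → A i κ = 0 := fun i hi ↦ h p i (Ne.symm hi) hp
    rw [Finset.sum_eq_single p (fun i _ hi ↦ by rw [hzero i hi, mul_zero]) (by simp)] at hsum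
    refine ⟨p, A p κ, IsUnit.of_mul_eq_one_right _ hsum, fun i ↦ ?_⟩
    by_cases hi : i = p
    · subst hi; simp
    · rw [hzero i hi, Pi.single_eq_of_ne hi]
  · simp [not_exists_not.mp hex] at hsum

variable (ι R) in
def elementarySubgroup : Subgroup (SpecialLinearGroup ι R) :=
  Subgroup.closure (Set.range TransvectionStruct.toSpecialLinearGroup)

theorem transvection_mem_elementarySubgroup {i j : ι} (hij : i ≠ j) (c : R) :
    transvection hij c ∈ elementarySubgroup ι R :=
  Subgroup.subset_closure ⟨⟨i, j, hij, c⟩, rfl⟩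

theorem coe_transvection {i j : ι} (hij : i ≠ j) (c : R) :
    (transvection hij c : Matrix ι ι R) = Matrix.transvection i j c := rfl

section Reduction

variable {S : Finset ι} {κ : ι}

theorem mem_elementarySubgroup_of_col_eq_one (hκ : κ ∈ S)
    (ih : ∀ B : SpecialLinearGroup ι R, EqOneOutside (S.erase κ) (B : Matrix ι ι R) →
      B ∈ elementarySubgroup ι R)
    (A : SpecialLinearGroup ι R) (hA : EqOneOutside S (A : Matrix ι ι R))
    (hcol : ∀ i, A i κ = (1 : Matrix ι ι R) i κ) : A ∈ elementarySubgroup ι R := by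
  suffices key : ∀ T ⊆ S, ∀ B : SpecialLinearGroup ι R, EqOneOutside S (B : Matrix ι ι R) →
      (∀ i, B i κ = (1 : Matrix ι ι R) i κ) → (∀ j ∉ T, B κ j = (1 : Matrix ι ι R) κ j) →
      B ∈ elementarySubgroup ι R from
    key S subset_rfl A hA hcol fun j hj ↦ hA κ j (.inr hj)
  intro T hT
  induction T using Finset.induction_on with
  | empty =>
    exact fun B hB hcol hrow ↦ ih B (hB.erase (fun j ↦ hrow j (Finset.notMem_empty j)) hcol)
  | insert j T _ ihT =>
    intro B hB hcol hrow
    obtain ⟨hjS, hTS⟩ := Finset.insert_subset_iff.mp hT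
    by_cases hjκ : j = κ
    · subst hjκ
      refine ihT hTS B hB hcol fun l hl ↦ ?_
      by_cases hlj : l = j
      · rw [hlj, hcol]
      · exact hrow l (by simp [hl, hlj])
    have hκj : κ ≠ j := Ne.symm hjκ
    rw [← Subgroup.mul_mem_cancel_right _ (transvection_mem_elementarySubgroup hκj (-B κ j))]
    refine ihT hTS _ (hB.mul_transvection hκ hjS _) (fun i ↦ ?_) (fun l hl ↦ ?_)
    · rw [coe_mul, coe_transvection, mul_transvection_apply_of_ne _ _ _ _ hκj, hcol]
    · by_cases hlj : l = j
      · subst hlj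
        rw [coe_mul, coe_transvection, mul_transvection_apply_same, hcol, one_apply_eq,
          one_apply_ne hκj]
        ring
      · rw [coe_mul, coe_transvection, mul_transvection_apply_of_ne _ _ _ _ hlj]
        exact hrow l (by simp [hl, hlj])

theorem mem_elementarySubgroup_of_col_eq_single {p q : ι} (hp : p ∈ S) (hq : q ∈ S) (hpq : p ≠ q)
    (hE : ∀ B : SpecialLinearGroup ι R, EqOneOutside S (B : Matrix ι ι R) →
      (∀ i, B i κ = (1 : Matrix ι ι R) i q) → B ∈ elementarySubgroup ι R)
    (A : SpecialLinearGroup ι R) (hA : EqOneOutside S (A : Matrix ι ι R)) {a : R} (ha : IsUnit a)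
    (hcol : ∀ i, A i κ = (Pi.single p a : ι → R) i) : A ∈ elementarySubgroup ι R := by
  rw [← Subgroup.mul_mem_cancel_left _ (transvection_mem_elementarySubgroup hpq.symm ↑ha.unit⁻¹),
    ← Subgroup.mul_mem_cancel_left _ (transvection_mem_elementarySubgroup hpq (-a))]
  refine hE _ ((hA.transvection_mul hq hp _).transvection_mul hp hq _) fun i ↦ ?_
  simp only [coe_mul, coe_transvection]
  rcases eq_or_ne i p with rfl | hip
  · simp [hcol, hpq]
  rcases eq_or_ne i q with rfl | hiq
  · simp [hcol, hip]
  · simp [hcol, hip, hiq]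

theorem mem_elementarySubgroup_of_col_reduced (hκ : κ ∈ S)
    (hE : ∀ B : SpecialLinearGroup ι ℤ, EqOneOutside S (B : Matrix ι ι ℤ) →
      (∀ p t, p ≠ t → B p κ ≠ 0 → B t κ = 0) → B ∈ elementarySubgroup ι ℤ)
    (A : SpecialLinearGroup ι ℤ) (hA : EqOneOutside S (A : Matrix ι ι ℤ)) :
    A ∈ elementarySubgroup ι ℤ := by
  induction hN : ∑ i, (A i κ).natAbs using Nat.strong_induction_on generalizing A with
  | _ N ih =>
  by_cases hcol : ∀ p t, p ≠ t → A p κ ≠ 0 → A t κ = 0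
  · exact hE A hA hcol
  push Not at hcol
  obtain ⟨p, t, hpt, hp, ht⟩ := hcol
  wlog hle : (A p κ).natAbs ≤ (A t κ).natAbs generalizing p t
  · exact this t p hpt.symm ht hp (le_of_not_ge hle)
  have htp : t ≠ p := hpt.symm
  set c := -(A t κ / A p κ)
  rw [← Subgroup.mul_mem_cancel_left _ (transvection_mem_elementarySubgroup htp c)]
  refine ih _ ?_ _ (hA.transvection_mul (hA.mem_of_ne_zero hκ ht) (hA.mem_of_ne_zero hκ hp) c) rfl
  have hrem : (transvection htp c * A) t κ = A t κ % A p κ := by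
    rw [coe_mul, coe_transvection, transvection_mul_apply_same, Int.emod_def]
    ring
  have hlt : (A t κ % A p κ).natAbs < (A p κ).natAbs := by
    have := Int.emod_lt_abs (A t κ) hp
    have := Int.emod_nonneg (A t κ) hp
    rw [Int.abs_eq_natAbs] at *
    omega
  rw [← hN]
  refine Finset.sum_lt_sum (fun i _ ↦ ?_) ⟨t, Finset.mem_univ t, by rw [hrem]; omega⟩
  by_cases hit : i = t
  · rw [hit, hrem]
    omega
  · rw [coe_mul, coe_transvection, transvection_mul_apply_of_ne _ _ _ _ hit]

theorem mem_elementarySubgroup_of_eqOneOutside (S : Finset ι) (A : SpecialLinearGroup ι ℤ)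
    (hA : EqOneOutside S (A : Matrix ι ι ℤ)) : A ∈ elementarySubgroup ι ℤ := by
  induction S using Finset.strongInduction generalizing A with
  | H S ih =>
  rcases le_or_gt S.card 1 with hS | hS
  · rw [eq_one_of_eqOneOutside hA hS]
    exact one_mem _
  obtain ⟨κ, hκ⟩ := Finset.card_pos.mp (by omega : 0 < S.card)
  have hclear := mem_elementarySubgroup_of_col_eq_one hκ (ih _ (Finset.erase_ssubset hκ))
  refine mem_elementarySubgroup_of_col_reduced hκ (fun B hB hcol ↦ ?_) A hA
  obtain ⟨p, a, ha, hBcol⟩ := exists_isUnit_col_eq_single B κ hcol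
  have hp : p ∈ S := hB.mem_of_ne_zero hκ (by rw [hBcol, Pi.single_eq_same]; exact ha.ne_zero)
  by_cases hpκ : p = κ
  · -- the pivot sits in row `κ` but may be `-1`: it is normalised on the way through a row `q ≠ κ`
    subst hpκ
    obtain ⟨q, hq, hqp⟩ := Finset.exists_mem_ne hS p
    exact mem_elementarySubgroup_of_col_eq_single hp hq hqp.symm
      (fun C hC hCcol ↦ mem_elementarySubgroup_of_col_eq_single hq hp hqp hclear C hC isUnit_one
        fun i ↦ by rw [hCcol, one_apply, Pi.single_apply]) B hB ha hBcol
  · exact mem_elementarySubgroup_of_col_eq_single hp hκ hpκ hclear B hB ha hBcol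

end Reduction

theorem elementarySubgroup_int_eq_top : elementarySubgroup ι ℤ = ⊤ :=
  eq_top_iff.mpr fun A _ ↦ mem_elementarySubgroup_of_eqOneOutside Finset.univ A
    fun i j hij ↦ by simp at hij

theorem commutatorElement_transvection_transvection {i j k : ι} (hik : i ≠ k) (hkj : k ≠ j)
    (hij : i ≠ j) (a b : R) :
    ⁅transvection hik a, transvection hkj b⁆ = transvection hij (a * b) := by
  rw [commutatorElement_def, transvection_inv, transvection_inv]
  refine Subtype.ext ?_
  simp only [coe_mul, transvection_coe, ← single_neg, mul_add, add_mul, Matrix.one_mul,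
    Matrix.mul_one, Matrix.mul_neg, Matrix.neg_mul, single_mul_single_same,
    single_mul_single_of_ne _ _ _ _ hik.symm, single_mul_single_of_ne _ _ _ _ hkj.symm,
    single_mul_single_of_ne _ _ _ _ hij.symm, neg_zero, add_zero]
  abel

theorem elementarySubgroup_le_commutator (hι : 3 ≤ Fintype.card ι) :
    elementarySubgroup ι R ≤ commutator (SpecialLinearGroup ι R) := by
  rw [elementarySubgroup, Subgroup.closure_le]
  rintro _ ⟨⟨i, j, hij, c⟩, rfl⟩
  obtain ⟨k, -, hk⟩ := Finset.exists_mem_notMem_of_card_lt_card (s := {i, j}) (t := Finset.univ)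
    (Finset.card_le_two.trans_lt (by rw [Finset.card_univ]; omega))
  simp only [Finset.mem_insert, Finset.mem_singleton, not_or] at hk
  rw [TransvectionStruct.toSpecialLinearGroup_mk, ← mul_one c,
    ← commutatorElement_transvection_transvection (Ne.symm hk.1) hk.2 hij]
  exact Subgroup.commutator_mem_commutator (Subgroup.mem_top _) (Subgroup.mem_top _)

theorem commutator_int_eq_top (hι : 3 ≤ Fintype.card ι) :
    commutator (SpecialLinearGroup ι ℤ) = ⊤ :=
  top_le_iff.mp (elementarySubgroup_int_eq_top (ι := ι) ▸ elementarySubgroup_le_commutator hι)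

end SpecialLinearGroup
end Matrix

/-- For `n ≥ 3`, the group `SLₙ(ℤ)` is perfect: its commutator subgroup is everything,
equivalently its abelianization is trivial. -/
theorem stmt_11 (n : ℕ) (hn : 3 ≤ n) :
    commutator (Matrix.SpecialLinearGroup (Fin n) ℤ) = ⊤ :=
  Matrix.SpecialLinearGroup.commutator_int_eq_top (ι := Fin n) (by rwa [Fintype.card_fin])
end
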